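/- For every integer n ≥ 4 there exists a constant c(n), depending only on n, such that every connected {K_n, S*_n, S̃_n, P_n}-free finite simple graph G satisfies insp(G) ≤ c(n). -/

import Mathlib

/-!
A connected `P_n`-free graph has diameter at most `n - 2`. For a vertex `x`, a minimal set `Y` of
neighbours of `x` dominating the vertices at distance two from `x` gives every `y ∈ Y` a private
neighbour `z y`; two applications of Ramsey's theorem turn a large `Y` into a `K_n` or into an
induced `S*_n` with centre `x`, so `|Y|` is bounded. Starting from one vertex and adding these
dominators `n - 2` times therefore yields a dominating set `D` of bounded size.

It remains to split each closed neighbourhood `{w} ∪ S`, `w ∈ D`, into boundedly many induced stars.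
More generally, let `U` lie in the common neighbourhood of a clique `C ∋ c`. A maximal induced
matching of `U` has fewer than `n` edges, for otherwise it forms an induced `S̃_n` with centre `c`.
The vertices of `U` untouched by it are independent, so together with `c` they form a star; every
other vertex of `U` is adjacent to one of the fewer than `2n` matched vertices `w'`, and we recurse
into `C ∪ {w'}`. Since `G` has no `K_n`, `U` is empty once `C` has `n - 1` vertices.
-/

open SimpleGraph

/-- `G` contains an induced subgraph isomorphic to `H`. -/
def HasInducedCopy {V W : Type*} (G : SimpleGraph V) (H : SimpleGraph W) : Prop :=
  ∃ f : W ↪ V, ∀ a b : W, G.Adj (f a) (f b) ↔ H.Adj a b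

/-- The star `K_{1,m}` (one center plus `m` leaves). -/
def starGraph (m : ℕ) : SimpleGraph (Unit ⊕ Fin m) := completeBipartiteGraph Unit (Fin m)

/-- `S` induces in `G` a subgraph isomorphic to a path `P_m` on `m ≥ 1` vertices. -/
def IsInducedPathSet {V : Type*} (G : SimpleGraph V) (S : Set V) : Prop :=
  ∃ m : ℕ, 1 ≤ m ∧ Nonempty ((G.induce S) ≃g pathGraph m)

/-- `S` induces in `G` a subgraph isomorphic to a star `K_{1,m}` with `m ≥ 1`. -/
def IsInducedStarSet {V : Type*} (G : SimpleGraph V) (S : Set V) : Prop :=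
  ∃ m : ℕ, 1 ≤ m ∧ Nonempty ((G.induce S) ≃g _root_.starGraph m)

/-- `S` consists of a single vertex (i.e. induces `K_1`). -/
def IsSingletonSet {V : Type*} (S : Set V) : Prop := ∃ v, S = {v}

/-- `S` is the vertex set of an isometric (shortest) path of `G`. -/
def IsIsometricPathSet {V : Type*} (G : SimpleGraph V) (S : Set V) : Prop :=
  ∃ (u v : V) (p : G.Walk u v), p.IsPath ∧ p.length = G.dist u v ∧
    S = {x | x ∈ p.support}

/-- `P` is a family of sets, all satisfying `pred`, whose union is all of `V`. -/
def IsCoverBy {V : Type*} (P : Finset (Set V)) (pred : Set V → Prop) : Prop :=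
  (∀ S ∈ P, pred S) ∧ ∀ v : V, ∃ S ∈ P, v ∈ S

/-- `P` is a cover by sets satisfying `pred`, whose members are pairwise disjoint. -/
def IsPartitionBy {V : Type*} (P : Finset (Set V)) (pred : Set V → Prop) : Prop :=
  IsCoverBy P pred ∧ ∀ S ∈ P, ∀ T ∈ P, S ≠ T → ∀ v, v ∈ S → v ∉ T

/-- Minimum cardinality of a cover by sets satisfying `pred`. -/
noncomputable def coverNumber {V : Type*} (pred : Set V → Prop) : ℕ :=
  sInf {k | ∃ P : Finset (Set V), P.card = k ∧ IsCoverBy P pred}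

/-- Minimum cardinality of a partition into sets satisfying `pred`. -/
noncomputable def partitionNumber {V : Type*} (pred : Set V → Prop) : ℕ :=
  sInf {k | ∃ P : Finset (Set V), P.card = k ∧ IsPartitionBy P pred}

/-- The induced SP-cover number. -/
noncomputable def inspc {V : Type*} (G : SimpleGraph V) : ℕ :=
  coverNumber (fun S => IsInducedStarSet G S ∨ IsInducedPathSet G S)

/-- The induced SP-partition number. -/
noncomputable def inspp {V : Type*} (G : SimpleGraph V) : ℕ :=
  partitionNumber (fun S => IsInducedStarSet G S ∨ IsInducedPathSet G S)

/-- The induced star cover number. -/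
noncomputable def insc {V : Type*} (G : SimpleGraph V) : ℕ :=
  coverNumber (fun S => IsInducedStarSet G S ∨ IsSingletonSet S)

/-- The induced star partition number. -/
noncomputable def insp {V : Type*} (G : SimpleGraph V) : ℕ :=
  partitionNumber (fun S => IsInducedStarSet G S ∨ IsSingletonSet S)

/-- The induced path cover number. -/
noncomputable def inpc {V : Type*} (G : SimpleGraph V) : ℕ :=
  coverNumber (fun S => IsInducedPathSet G S)

/-- The induced path partition number. -/
noncomputable def inpp {V : Type*} (G : SimpleGraph V) : ℕ :=
  partitionNumber (fun S => IsInducedPathSet G S)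

/-- The isometric path cover number. -/
noncomputable def ispc {V : Type*} (G : SimpleGraph V) : ℕ :=
  coverNumber (fun S => IsIsometricPathSet G S)

/-- The isometric path partition number. -/
noncomputable def ispp {V : Type*} (G : SimpleGraph V) : ℕ :=
  partitionNumber (fun S => IsIsometricPathSet G S)

/-- `S*_n` : center `x = inl ()`, middle vertices `y i = inr (inl i)`,
leaves `z i = inr (inr i)`; edges `x yᵢ` and `yᵢ zᵢ`. -/
def SStar (n : ℕ) : SimpleGraph (Unit ⊕ Fin n ⊕ Fin n) :=
  SimpleGraph.fromRel (fun a b =>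
    (∃ i : Fin n, a = Sum.inl () ∧ b = Sum.inr (Sum.inl i)) ∨
    (∃ i : Fin n, a = Sum.inr (Sum.inl i) ∧ b = Sum.inr (Sum.inr i)))

/-- `S̃_n` : `S*_n` together with the edges `x zᵢ`. -/
def STilde (n : ℕ) : SimpleGraph (Unit ⊕ Fin n ⊕ Fin n) :=
  SimpleGraph.fromRel (fun a b =>
    (∃ i : Fin n, a = Sum.inl () ∧ b = Sum.inr (Sum.inl i)) ∨
    (∃ i : Fin n, a = Sum.inr (Sum.inl i) ∧ b = Sum.inr (Sum.inr i)) ∨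
    (∃ i : Fin n, a = Sum.inl () ∧ b = Sum.inr (Sum.inr i)))

/-- `F⁽¹⁾_n` : vertices `x₁ = inl 0`, `x₂ = inl 1`, `yᵢ = inr (inl i)`, `zᵢ = inr (inr i)`;
edges `x₁x₂`, `x₁y₁`, `x₁z₁`, and two paths `y₁⋯yₙ`, `z₁⋯zₙ`. -/
def F1 (n : ℕ) : SimpleGraph (Fin 2 ⊕ Fin n ⊕ Fin n) :=
  SimpleGraph.fromRel (fun a b =>
    (a = Sum.inl 0 ∧ b = Sum.inl 1) ∨
    (∃ j : Fin n, (j : ℕ) = 0 ∧ a = Sum.inl 0 ∧ b = Sum.inr (Sum.inl j)) ∨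
    (∃ j : Fin n, (j : ℕ) = 0 ∧ a = Sum.inl 0 ∧ b = Sum.inr (Sum.inr j)) ∨
    (∃ i j : Fin n, (i : ℕ) + 1 = (j : ℕ) ∧ a = Sum.inr (Sum.inl i) ∧ b = Sum.inr (Sum.inl j)) ∨
    (∃ i j : Fin n, (i : ℕ) + 1 = (j : ℕ) ∧ a = Sum.inr (Sum.inr i) ∧ b = Sum.inr (Sum.inr j)))

/-- `F⁽²⁾_n` : vertex `x₁ = inl ()`, `yᵢ = inr (inl i)`, `zᵢ = inr (inr i)`;
edges `x₁y₁`, `x₁z₁`, `y₁z₁`, and two paths `y₁⋯yₙ`, `z₁⋯zₙ`. -/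
def F2 (n : ℕ) : SimpleGraph (Unit ⊕ Fin n ⊕ Fin n) :=
  SimpleGraph.fromRel (fun a b =>
    (∃ j : Fin n, (j : ℕ) = 0 ∧ a = Sum.inl () ∧ b = Sum.inr (Sum.inl j)) ∨
    (∃ j : Fin n, (j : ℕ) = 0 ∧ a = Sum.inl () ∧ b = Sum.inr (Sum.inr j)) ∨
    (∃ i j : Fin n, (i : ℕ) = 0 ∧ (j : ℕ) = 0 ∧ a = Sum.inr (Sum.inl i) ∧ b = Sum.inr (Sum.inr j)) ∨
    (∃ i j : Fin n, (i : ℕ) + 1 = (j : ℕ) ∧ a = Sum.inr (Sum.inl i) ∧ b = Sum.inr (Sum.inl j)) ∨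
    (∃ i j : Fin n, (i : ℕ) + 1 = (j : ℕ) ∧ a = Sum.inr (Sum.inr i) ∧ b = Sum.inr (Sum.inr j)))

/-- `F⁽³⁾_n` : vertices `xᵢ = inl i`, `yᵢ = inr (inl i)`, `zᵢ = inr (inr i)`;
edges `xᵢy₁`, `xᵢz₁` for all `i`, and two paths `y₁⋯yₙ`, `z₁⋯zₙ`. -/
def F3 (n : ℕ) : SimpleGraph (Fin n ⊕ Fin n ⊕ Fin n) :=
  SimpleGraph.fromRel (fun a b =>
    (∃ (i j : Fin n), (j : ℕ) = 0 ∧ a = Sum.inl i ∧ b = Sum.inr (Sum.inl j)) ∨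
    (∃ (i j : Fin n), (j : ℕ) = 0 ∧ a = Sum.inl i ∧ b = Sum.inr (Sum.inr j)) ∨
    (∃ i j : Fin n, (i : ℕ) + 1 = (j : ℕ) ∧ a = Sum.inr (Sum.inl i) ∧ b = Sum.inr (Sum.inl j)) ∨
    (∃ i j : Fin n, (i : ℕ) + 1 = (j : ℕ) ∧ a = Sum.inr (Sum.inr i) ∧ b = Sum.inr (Sum.inr j)))

/-- `F⁽⁴⁾_n` : `F⁽³⁾_n` with only `x₁, x₂` kept (no edge `x₁x₂`). -/
def F4 (n : ℕ) : SimpleGraph (Fin 2 ⊕ Fin n ⊕ Fin n) :=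
  SimpleGraph.fromRel (fun a b =>
    (∃ (i : Fin 2) (j : Fin n), (j : ℕ) = 0 ∧ a = Sum.inl i ∧ b = Sum.inr (Sum.inl j)) ∨
    (∃ (i : Fin 2) (j : Fin n), (j : ℕ) = 0 ∧ a = Sum.inl i ∧ b = Sum.inr (Sum.inr j)) ∨
    (∃ i j : Fin n, (i : ℕ) + 1 = (j : ℕ) ∧ a = Sum.inr (Sum.inl i) ∧ b = Sum.inr (Sum.inl j)) ∨
    (∃ i j : Fin n, (i : ℕ) + 1 = (j : ℕ) ∧ a = Sum.inr (Sum.inr i) ∧ b = Sum.inr (Sum.inr j)))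

/-- `F⁽⁵⁾_n` : `F⁽⁴⁾_n` plus the edge `x₁x₂`. -/
def F5 (n : ℕ) : SimpleGraph (Fin 2 ⊕ Fin n ⊕ Fin n) :=
  SimpleGraph.fromRel (fun a b =>
    (a = Sum.inl 0 ∧ b = Sum.inl 1) ∨
    (∃ (i : Fin 2) (j : Fin n), (j : ℕ) = 0 ∧ a = Sum.inl i ∧ b = Sum.inr (Sum.inl j)) ∨
    (∃ (i : Fin 2) (j : Fin n), (j : ℕ) = 0 ∧ a = Sum.inl i ∧ b = Sum.inr (Sum.inr j)) ∨
    (∃ i j : Fin n, (i : ℕ) + 1 = (j : ℕ) ∧ a = Sum.inr (Sum.inl i) ∧ b = Sum.inr (Sum.inl j)) ∨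
    (∃ i j : Fin n, (i : ℕ) + 1 = (j : ℕ) ∧ a = Sum.inr (Sum.inr i) ∧ b = Sum.inr (Sum.inr j)))

/-- The Ramsey number `R(a,b)` : least `R` such that every simple graph on at least `R`
vertices contains a clique of size `a` or an independent set of size `b`. -/
noncomputable def ramseyNumber (a b : ℕ) : ℕ :=
  sInf {R : ℕ | ∀ (m : ℕ) (G : SimpleGraph (Fin m)), R ≤ m →
    (∃ s : Finset (Fin m), s.card = a ∧ ∀ u ∈ s, ∀ v ∈ s, u ≠ v → G.Adj u v) ∨
    (∃ s : Finset (Fin m), s.card = b ∧ ∀ u ∈ s, ∀ v ∈ s, u ≠ v → ¬ G.Adj u v)}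

/-- `ξ_{n,i} = ((R(n-1,n)-1)^i - 1)/(R(n-1,n)-2)`. -/
noncomputable def xi (n i : ℕ) : ℕ :=
  ((ramseyNumber (n - 1) n - 1) ^ i - 1) / (ramseyNumber (n - 1) n - 2)


open Finset

namespace SimpleGraph

variable {V : Type*} {G : SimpleGraph V}

theorem hasInducedCopy_iff_isIndContained {W : Type*} {H : SimpleGraph W} :
    HasInducedCopy G H ↔ H ⊴ G :=
  ⟨fun ⟨f, hf⟩ => ⟨⟨f, hf _ _⟩⟩, fun ⟨f⟩ => ⟨f.toEmbedding, fun _ _ => f.map_rel_iff⟩⟩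

theorem not_hasInducedCopy_completeGraph_iff {n : ℕ} :
    ¬ HasInducedCopy G (completeGraph (Fin n)) ↔ G.CliqueFree n := by
  rw [hasInducedCopy_iff_isIndContained, top_isIndContained_iff_top_isContained,
    ← not_cliqueFree_iff_top_isContained, not_not]

def ramseyBound : ℕ → ℕ → ℕ
  | 0, _ => 0
  | _ + 1, 0 => 0
  | a + 1, b + 1 => ramseyBound a (b + 1) + ramseyBound (a + 1) b + 1

theorem exists_isNClique_or_isNIndepSet :
    ∀ (a b : ℕ) (s : Finset V), ramseyBound a b ≤ #s →
      (∃ t ⊆ s, G.IsNClique a t) ∨ ∃ t ⊆ s, G.IsNIndepSet b t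
  | 0, _, _, _ => .inl ⟨∅, empty_subset _, by simp⟩
  | _ + 1, 0, _, _ => .inr ⟨∅, empty_subset _, by simp [isNIndepSet_iff]⟩
  | a + 1, b + 1, s, hs => by
    classical
    obtain ⟨v, hv⟩ : s.Nonempty := card_pos.mp (by simp only [ramseyBound] at hs; omega)
    set A := (s.erase v).filter (G.Adj v)
    set B := (s.erase v).filter (fun u => ¬ G.Adj v u)
    have hAs : A ⊆ s := (filter_subset _ _).trans (erase_subset _ _)
    have hBs : B ⊆ s := (filter_subset _ _).trans (erase_subset _ _)
    have hAB : #A + #B + 1 = #s := by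
      rw [card_filter_add_card_filter_not, card_erase_add_one hv]
    rcases (by simp only [ramseyBound] at hs; omega :
        ramseyBound a (b + 1) ≤ #A ∨ ramseyBound (a + 1) b ≤ #B) with hA | hB
    · rcases exists_isNClique_or_isNIndepSet a (b + 1) A hA with ⟨t, htA, ht⟩ | ⟨t, htA, ht⟩
      · exact .inl ⟨insert v t, insert_subset hv (htA.trans hAs),
          ht.insert fun u hu => (mem_filter.mp (htA hu)).2⟩
      · exact .inr ⟨t, htA.trans hAs, ht⟩
    · rcases exists_isNClique_or_isNIndepSet (a + 1) b B hB with ⟨t, htB, ht⟩ | ⟨t, htB, ht⟩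
      · exact .inl ⟨t, htB.trans hBs, ht⟩
      · refine .inr ⟨insert v t, insert_subset hv (htB.trans hBs), ?_⟩
        rw [← isNClique_compl] at ht ⊢
        refine ht.insert fun u hu => ?_
        obtain ⟨hu, hvu⟩ := mem_filter.mp (htB hu)
        exact (compl_adj G v u).mpr ⟨(ne_of_mem_erase hu).symm, hvu⟩

theorem Walk.sub_le_dist_getVert {u v : V} (p : G.Walk u v)
    (hp : p.length = G.dist u v) {i j : ℕ} (hij : i ≤ j) (hj : j ≤ p.length) :
    j - i ≤ G.dist (p.getVert i) (p.getVert j) := by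
  have hui := (dist_le (p.take i)).trans_eq (p.take_length i)
  have hjv := (dist_le (p.drop j)).trans_eq (p.drop_length j)
  have h₁ := (p.take i).reachable.dist_triangle_left v
  have h₂ := ((p.take i).reachable.symm.trans (p.take j).reachable).dist_triangle_left v
  rw [min_eq_left (by omega)] at hui
  omega

theorem dist_add_two_le_of_not_hasInducedCopy_pathGraph {n : ℕ} (hconn : G.Connected)
    (hP : ¬ HasInducedCopy G (pathGraph n)) (u v : V) : G.dist u v + 2 ≤ n := by
  by_contra! hn
  obtain ⟨p, hp⟩ := hconn.exists_walk_length_eq_dist u v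
  have key {i j : Fin n} (hij : (i : ℕ) < j) : p.getVert i ≠ p.getVert j ∧
      (G.Adj (p.getVert i) (p.getVert j) ↔ (i : ℕ) + 1 = j) := by
    have hsep := p.sub_le_dist_getVert hp hij.le (j := j) (by omega)
    refine ⟨fun h => by rw [h, dist_self] at hsep; omega, fun h => ?_, fun h => ?_⟩
    · rw [← dist_eq_one_iff_adj] at h
      omega
    · simpa [← h] using p.adj_getVert_succ (i := i) (by omega)
  have hinj : Function.Injective fun i : Fin n => p.getVert i := fun i j hij => by
    by_contra hne
    rcases Fin.lt_or_lt_of_ne hne with h | h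
    exacts [(key h).1 hij, (key h).1 hij.symm]
  refine hP ⟨⟨_, hinj⟩, fun i j => ?_⟩
  change G.Adj (p.getVert i) (p.getVert j) ↔ _
  rw [pathGraph_adj]
  rcases lt_trichotomy i j with h | rfl | h
  · rw [(key h).2]
    omega
  · simp
  · rw [G.adj_comm, (key h).2]
    omega

def Separated (G : SimpleGraph V) (A B : Set V) : Prop :=
  ∀ a ∈ A, ∀ b ∈ B, a ≠ b ∧ ¬ G.Adj a b

theorem separated_pair_pair {a b c d : V} : Separated G {a, b} {c, d} ↔
    (a ≠ c ∧ ¬ G.Adj a c) ∧ (a ≠ d ∧ ¬ G.Adj a d) ∧ (b ≠ c ∧ ¬ G.Adj b c) ∧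
      (b ≠ d ∧ ¬ G.Adj b d) := by
  simp only [Separated, Set.forall_mem_insert, Set.mem_singleton_iff, forall_eq, and_assoc]

theorem Separated.symm {A B : Set V} (h : Separated G A B) : Separated G B A :=
  fun b hb a ha => ⟨(h a ha b hb).1.symm, fun hba => (h a ha b hb).2 hba.symm⟩

section Spiders

variable {n : ℕ} {x : V} {y z : Fin n → V}

theorem injective_sum_elim_of_separated (hxy : ∀ i, x ≠ y i) (hxz : ∀ i, x ≠ z i)
    (hyz : ∀ i, y i ≠ z i) (hsep : Pairwise fun i j => Separated G {y i, z i} {y j, z j}) :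
    Function.Injective (Sum.elim (fun _ : Unit => x) (Sum.elim y z)) := by
  have hsep' := fun i j (hij : i ≠ j) => separated_pair_pair.mp (hsep hij)
  rintro (⟨⟩|i|i) (⟨⟩|j|j) h <;> simp only [Sum.elim_inl, Sum.elim_inr] at h <;> grind

theorem hasInducedCopy_sStar_of_separated (hxy : ∀ i, G.Adj x (y i))
    (hxz : ∀ i, x ≠ z i ∧ ¬ G.Adj x (z i)) (hyz : ∀ i, G.Adj (y i) (z i))
    (hsep : Pairwise fun i j => Separated G {y i, z i} {y j, z j}) :
    HasInducedCopy G (SStar n) := by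
  have hsep' := fun i j (hij : i ≠ j) => separated_pair_pair.mp (hsep hij)
  refine ⟨⟨_, injective_sum_elim_of_separated (fun i => (hxy i).ne) (fun i => (hxz i).1)
    (fun i => (hyz i).ne) hsep⟩, ?_⟩
  rintro (⟨⟩|i|i) (⟨⟩|j|j) <;> simp only [SStar, fromRel_adj, Function.Embedding.coeFn_mk,
    Sum.elim_inl, Sum.elim_inr] <;> grind [SimpleGraph.adj_comm, SimpleGraph.irrefl]

theorem hasInducedCopy_sTilde_of_separated (hxy : ∀ i, G.Adj x (y i)) (hxz : ∀ i, G.Adj x (z i))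
    (hyz : ∀ i, G.Adj (y i) (z i))
    (hsep : Pairwise fun i j => Separated G {y i, z i} {y j, z j}) :
    HasInducedCopy G (STilde n) := by
  have hsep' := fun i j (hij : i ≠ j) => separated_pair_pair.mp (hsep hij)
  refine ⟨⟨_, injective_sum_elim_of_separated (fun i => (hxy i).ne) (fun i => (hxz i).ne)
    (fun i => (hyz i).ne) hsep⟩, ?_⟩
  rintro (⟨⟩|i|i) (⟨⟩|j|j) <;> simp only [STilde, fromRel_adj, Function.Embedding.coeFn_mk,
    Sum.elim_inl, Sum.elim_inr] <;> grind [SimpleGraph.adj_comm, SimpleGraph.irrefl]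

end Spiders

theorem exists_dominating_subset_with_private_neighbor (N : Finset V) (T : Set V)
    (hN : ∀ t ∈ T, ∃ y ∈ N, G.Adj y t) :
    ∃ Y ⊆ N, (∀ t ∈ T, ∃ y ∈ Y, G.Adj y t) ∧
      ∀ y ∈ Y, ∃ t ∈ T, G.Adj y t ∧ ∀ y' ∈ Y, G.Adj y' t → y' = y := by
  classical
  obtain ⟨Y, hY, hmin⟩ := exists_min_image
    (N.powerset.filter fun Y => ∀ t ∈ T, ∃ y ∈ Y, G.Adj y t) card
    ⟨N, mem_filter.mpr ⟨mem_powerset_self N, hN⟩⟩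
  obtain ⟨hYN, hYdom⟩ := mem_filter.mp hY
  refine ⟨Y, mem_powerset.mp hYN, hYdom, fun y hy => ?_⟩
  by_contra! hpriv
  have hdom : ∀ t ∈ T, ∃ y' ∈ Y.erase y, G.Adj y' t := fun t ht => by
    obtain ⟨y', hy', hadj⟩ := hYdom t ht
    obtain rfl | hne := eq_or_ne y' y
    · obtain ⟨y'', hy'', hadj', hne'⟩ := hpriv t ht hadj
      exact ⟨y'', mem_erase.mpr ⟨hne', hy''⟩, hadj'⟩
    · exact ⟨y', mem_erase.mpr ⟨hne, hy'⟩, hadj⟩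
  have := hmin (Y.erase y) (mem_filter.mpr
    ⟨mem_powerset.mpr ((erase_subset y Y).trans (mem_powerset.mp hYN)), hdom⟩)
  rw [card_erase_of_mem hy] at this
  have := card_pos.mpr ⟨y, hy⟩
  omega

theorem isNClique_image_of_isNClique_comap {W : Type*} {H : SimpleGraph W} [DecidableEq W]
    {f : V → W} {s : Finset V} {n : ℕ} (hs : (H.comap f).IsNClique n s) :
    H.IsNClique n (s.image f) := by
  have hinj : Set.InjOn f s := fun a ha b hb hab => by
    by_contra hne
    have := hs.1 ha hb hne
    rw [comap_adj, hab] at this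
    exact H.irrefl this
  refine ⟨?_, (card_image_of_injOn hinj).trans hs.2⟩
  rw [IsClique, coe_image]
  rintro _ ⟨a, ha, rfl⟩ _ ⟨b, hb, rfl⟩ hne
  exact hs.1 ha hb fun h => hne (h ▸ rfl)

theorem card_lt_ramseyBound_of_private_neighbor {n : ℕ} (hK : G.CliqueFree n)
    (hS : ¬ HasInducedCopy G (SStar n)) {x : V} {Y : Finset V} (hxY : ∀ y ∈ Y, G.Adj x y)
    (z : V → V) (hz : ∀ y ∈ Y, G.Adj y (z y) ∧ (x ≠ z y ∧ ¬ G.Adj x (z y)) ∧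
      ∀ y' ∈ Y, G.Adj y' (z y) → y' = y) :
    #Y < ramseyBound (n - 1) (ramseyBound n n) := by
  classical
  by_contra! hY
  rcases exists_isNClique_or_isNIndepSet (n - 1) _ Y hY with ⟨t, htY, ht⟩ | ⟨t, htY, ht⟩
  · exact hK.mono (by omega : n ≤ n - 1 + 1) _ (ht.insert fun y hy => hxY y (htY hy))
  rcases exists_isNClique_or_isNIndepSet (G := G.comap z) n n t ht.2.ge with
    ⟨s, hst, hs⟩ | ⟨s, hst, hs⟩
  · exact hK _ (isNClique_image_of_isNClique_comap hs)
  have hsY {a : V} (ha : a ∈ s) : a ∈ Y := htY (hst ha)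
  have hsep {a b : V} (ha : a ∈ s) (hb : b ∈ s) (hab : a ≠ b) :
      Separated G {a, z a} {b, z b} := by
    obtain ⟨hza, hxza, hpriva⟩ := hz a (hsY ha)
    obtain ⟨hzb, hxzb, hprivb⟩ := hz b (hsY hb)
    refine separated_pair_pair.mpr ⟨⟨hab, ht.1 (hst ha) (hst hb) hab⟩, ⟨?_, ?_⟩, ⟨?_, ?_⟩,
      fun h => hab (hprivb a (hsY ha) (h ▸ hza)), hs.1 ha hb hab⟩
    · exact fun h => hxzb.2 (h ▸ hxY a (hsY ha))
    · exact fun h => hab (hprivb a (hsY ha) h)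
    · exact fun h => hxza.2 (h ▸ hxY b (hsY hb))
    · exact fun h => hab (hpriva b (hsY hb) h.symm).symm
  let e := s.equivFinOfCardEq hs.2
  have he (i : Fin n) : (e.symm i : V) ∈ s := (e.symm i).2
  exact hS (hasInducedCopy_sStar_of_separated (x := x) (y := fun i => e.symm i)
    (z := fun i => z (e.symm i)) (fun i => hxY _ (hsY (he i))) (fun i => (hz _ (hsY (he i))).2.1)
    (fun i => (hz _ (hsY (he i))).1) fun i j hij => hsep (he i) (he j)
      fun h => hij (e.symm.injective (Subtype.ext h)))

theorem exists_card_lt_dominating_edist_eq_two {n : ℕ} [Fintype V] (hK : G.CliqueFree n)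
    (hS : ¬ HasInducedCopy G (SStar n)) (x : V) :
    ∃ Y : Finset V, #Y < ramseyBound (n - 1) (ramseyBound n n) ∧
      ∀ u, G.edist x u = 2 → ∃ y ∈ Y, G.Adj y u := by
  classical
  obtain ⟨Y, hYN, hdom, hpriv⟩ := exists_dominating_subset_with_private_neighbor
    (G.neighborFinset x) {u | G.edist x u = 2} fun u hu => by
      obtain ⟨-, -, y, hy⟩ := edist_eq_two_iff.mp hu
      rw [mem_commonNeighbors] at hy
      exact ⟨y, (mem_neighborFinset G x y).mpr hy.1, hy.2.symm⟩
  have hxY : ∀ y ∈ Y, G.Adj x y := fun y hy => (mem_neighborFinset G x y).mp (hYN hy)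
  choose! z hz using hpriv
  refine ⟨Y, card_lt_ramseyBound_of_private_neighbor hK hS hxY z fun y hy => ?_, hdom⟩
  obtain ⟨hxz, hyz, hprivz⟩ := hz y hy
  obtain ⟨hne, hnadj, -⟩ := edist_eq_two_iff.mp hxz
  exact ⟨hyz, ⟨hne, hnadj⟩, hprivz⟩

section Domination

variable [DecidableEq V]

def iterateDominators (Y : V → Finset V) (v₀ : V) : ℕ → Finset V
  | 0 => {v₀}
  | ℓ + 1 => iterateDominators Y v₀ ℓ ∪ (iterateDominators Y v₀ ℓ).biUnion Y

variable {Y : V → Finset V} {v₀ : V}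

theorem monotone_iterateDominators : Monotone (iterateDominators Y v₀) :=
  monotone_nat_of_le_succ fun _ => subset_union_left

theorem card_iterateDominators_le {h : ℕ} (hY : ∀ x, #(Y x) ≤ h) (ℓ : ℕ) :
    #(iterateDominators Y v₀ ℓ) ≤ (h + 1) ^ ℓ := by
  induction ℓ with
  | zero => simp [iterateDominators]
  | succ ℓ ih =>
    calc #(iterateDominators Y v₀ (ℓ + 1))
        ≤ #(iterateDominators Y v₀ ℓ) + #(iterateDominators Y v₀ ℓ) * h :=
          (card_union_le _ _).trans
            (by gcongr; exact card_biUnion_le_card_mul _ _ _ fun x _ => hY x)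
      _ ≤ (h + 1) ^ (ℓ + 1) := by rw [pow_succ]; nlinarith

theorem exists_mem_iterateDominators_of_walk
    (hY : ∀ x u, G.edist x u = 2 → ∃ y ∈ Y x, G.Adj y u) {u : V} (p : G.Walk u v₀) :
    ∃ w ∈ iterateDominators Y v₀ p.length, w = u ∨ G.Adj w u := by
  induction p with
  | nil => exact ⟨_, mem_singleton_self _, .inl rfl⟩
  | @cons u u' _ huu' q ih =>
    obtain ⟨w, hw, hwu'⟩ := ih
    have hw₁ := monotone_iterateDominators q.length.le_succ hw
    rw [Walk.length_cons]
    rcases hwu' with rfl | hwu'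
    · exact ⟨w, hw₁, .inr huu'.symm⟩
    by_cases hw' : w = u ∨ G.Adj w u
    · exact ⟨w, hw₁, hw'⟩
    obtain ⟨hne, hnadj⟩ := not_or.mp hw'
    obtain ⟨y, hy, hyu⟩ := hY w u (edist_eq_two_iff.mpr
      ⟨hne, hnadj, u', (mem_commonNeighbors G).mpr ⟨hwu', huu'⟩⟩)
    exact ⟨y, mem_union_right _ (mem_biUnion.mpr ⟨w, hw, hy⟩), .inr hyu⟩

end Domination

theorem exists_dominating_card_le [Fintype V] {n : ℕ}
    (hconn : G.Connected) (hK : G.CliqueFree n) (hS : ¬ HasInducedCopy G (SStar n))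
    (hP : ¬ HasInducedCopy G (pathGraph n)) :
    ∃ D : Finset V, #D ≤ (ramseyBound (n - 1) (ramseyBound n n) + 1) ^ (n - 2) ∧
      ∀ u, ∃ w ∈ D, w = u ∨ G.Adj w u := by
  classical
  choose Y hYcard hY using exists_card_lt_dominating_edist_eq_two hK hS
  obtain ⟨v₀⟩ := hconn.nonempty
  refine ⟨iterateDominators Y v₀ (n - 2), card_iterateDominators_le (fun x => (hYcard x).le) _,
    fun u => ?_⟩
  obtain ⟨p, hp⟩ := hconn.exists_walk_length_eq_dist u v₀
  obtain ⟨w, hw, hwu⟩ := exists_mem_iterateDominators_of_walk hY p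
  have := dist_add_two_le_of_not_hasInducedCopy_pathGraph hconn hP u v₀
  exact ⟨w, monotone_iterateDominators (by omega) hw, hwu⟩

theorem isInducedStarSet_insert [Finite V] {c : V} {I : Set V} (hI : I.Nonempty) (hc : c ∉ I)
    (hcI : ∀ x ∈ I, G.Adj c x) (hind : G.IsIndepSet I) : IsInducedStarSet G (insert c I) := by
  have := I.toFinite.fintype
  let e := (Fintype.equivFin I).symm
  let f : Unit ⊕ Fin (Fintype.card I) → V := Sum.elim (fun _ => c) (Subtype.val ∘ e)
  have hf : Function.Injective f := by
    rintro (_ | i) (_ | j) h <;>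
      simp only [f, Sum.elim_inl, Sum.elim_inr, Function.comp_apply] at h
    · rfl
    · exact (hc (h ▸ (e j).2)).elim
    · exact (hc (h ▸ (e i).2)).elim
    · rw [e.injective (Subtype.ext h)]
  have hrange : Set.range f = insert c I := by
    rw [Set.Sum.elim_range, Set.range_const, e.surjective.range_comp, Subtype.range_coe,
      Set.singleton_union]
  refine ⟨Fintype.card I, Fintype.card_pos_iff.mpr hI.to_subtype, ⟨?_⟩⟩
  rw [← hrange]
  refine (Embedding.isoInduceRange (G := _root_.starGraph _) ⟨⟨f, hf⟩, ?_⟩).symm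
  rintro (_ | i) (_ | j)
  · simp [f]
  · simpa [f, _root_.starGraph] using hcI _ (e j).2
  · simpa [f, _root_.starGraph] using (hcI _ (e i).2).symm
  · simpa [f, _root_.starGraph] using fun h : G.Adj (e i) (e j) =>
      hind (e i).2 (e j).2 (G.ne_of_adj h) h

def HasStarPartition (G : SimpleGraph V) (U : Set V) (k : ℕ) : Prop :=
  ∃ P : Finset (Set V), #P ≤ k ∧ (∀ S ∈ P, (IsInducedStarSet G S ∨ IsSingletonSet S) ∧ S ⊆ U) ∧
    (∀ v ∈ U, ∃ S ∈ P, v ∈ S) ∧ (P : Set (Set V)).PairwiseDisjoint id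

theorem insp_le_of_hasStarPartition {k : ℕ} (h : HasStarPartition G Set.univ k) : insp G ≤ k := by
  obtain ⟨P, hPk, hP, hcover, hdisj⟩ := h
  refine (Nat.sInf_le ?_).trans hPk
  exact ⟨P, rfl, ⟨fun S hS => (hP S hS).1, fun v => hcover v trivial⟩,
    fun S hS T hT hST v hv => Set.disjoint_left.mp (hdisj hS hT hST) hv⟩

theorem HasStarPartition.mono {U : Set V} {k k' : ℕ} (h : HasStarPartition G U k) (hk : k ≤ k') :
    HasStarPartition G U k' :=
  let ⟨P, hPk, hP⟩ := h
  ⟨P, hPk.trans hk, hP⟩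

theorem HasStarPartition.union {U₁ U₂ : Set V} {k₁ k₂ : ℕ}
    (h₁ : HasStarPartition G U₁ k₁) (h₂ : HasStarPartition G U₂ k₂) (hU : Disjoint U₁ U₂) :
    HasStarPartition G (U₁ ∪ U₂) (k₁ + k₂) := by
  classical
  obtain ⟨P₁, hP₁k, hP₁, hcover₁, hdisj₁⟩ := h₁
  obtain ⟨P₂, hP₂k, hP₂, hcover₂, hdisj₂⟩ := h₂
  refine ⟨P₁ ∪ P₂, (card_union_le _ _).trans (add_le_add hP₁k hP₂k), ?_, ?_, ?_⟩
  · intro S hS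
    rcases mem_union.mp hS with hS | hS
    · exact ⟨(hP₁ S hS).1, (hP₁ S hS).2.trans Set.subset_union_left⟩
    · exact ⟨(hP₂ S hS).1, (hP₂ S hS).2.trans Set.subset_union_right⟩
  · rintro v (hv | hv)
    · obtain ⟨S, hS, hvS⟩ := hcover₁ v hv
      exact ⟨S, mem_union_left _ hS, hvS⟩
    · obtain ⟨S, hS, hvS⟩ := hcover₂ v hv
      exact ⟨S, mem_union_right _ hS, hvS⟩
  · rw [coe_union, Set.pairwiseDisjoint_union]
    exact ⟨hdisj₁, hdisj₂, fun S hS T hT _ => hU.mono (hP₁ S hS).2 (hP₂ T hT).2⟩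

theorem hasStarPartition_insert_of_isIndepSet [Finite V] {c : V} {I : Set V} (hc : c ∉ I)
    (hcI : ∀ x ∈ I, G.Adj c x) (hind : G.IsIndepSet I) : HasStarPartition G (insert c I) 1 := by
  rcases I.eq_empty_or_nonempty with rfl | hI
  · exact ⟨{{c}}, by simp, by simp [IsSingletonSet], by simp, by simp⟩
  · exact ⟨{insert c I}, by simp, by simp [isInducedStarSet_insert hI hc hcI hind], by simp,
      by simp⟩

theorem hasStarPartition_union_of_dominating {W : Finset V} {R : Set V} {b : ℕ}
    (hWR : Disjoint (W : Set V) R) (hdom : ∀ u ∈ R, ∃ w ∈ W, G.Adj w u)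
    (hpart : ∀ w ∈ W, ∀ S ⊆ R, (∀ u ∈ S, G.Adj w u) → HasStarPartition G (insert w S) b) :
    HasStarPartition G (W ∪ R) (#W * b) := by
  classical
  induction W using Finset.induction_on generalizing R with
  | empty =>
    obtain rfl : R = ∅ := Set.eq_empty_of_forall_notMem fun u hu => by simpa using hdom u hu
    exact ⟨∅, by simp, by simp, by simp, by simp⟩
  | @insert w W hw ih =>
    have hwR : w ∉ R := Set.disjoint_left.mp hWR (mem_insert_self w W)
    have h₁ := hpart w (mem_insert_self w W) (R ∩ {u | G.Adj w u}) Set.inter_subset_left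
      fun u hu => hu.2
    have h₂ := ih (R := R \ {u | G.Adj w u})
      (hWR.mono (by simp) Set.sdiff_subset)
      (fun u hu => by
        obtain ⟨w', hw', hw'u⟩ := hdom u hu.1
        rcases mem_insert.mp hw' with rfl | hw'
        exacts [(hu.2 hw'u).elim, ⟨w', hw', hw'u⟩])
      fun w' hw' S hS hSw' => hpart w' (mem_insert_of_mem hw') S (hS.trans Set.sdiff_subset) hSw'
    have hdisj : Disjoint (insert w (R ∩ {u | G.Adj w u})) (↑W ∪ R \ {u | G.Adj w u}) := by
      rw [Set.disjoint_left]
      rintro u (rfl | ⟨huR, huw⟩) (huW | ⟨huR', hnadj⟩)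
      exacts [hw huW, hwR huR', Set.disjoint_left.mp hWR (mem_insert_of_mem huW) huR, hnadj huw]
    convert h₁.union h₂ hdisj using 1
    · ext u
      simp only [coe_insert, Set.mem_union, Set.mem_insert_iff, SetLike.mem_coe,
        Set.mem_inter_iff, Set.mem_ofPred_eq, Set.mem_sdiff]
      tauto
    · rw [card_insert_of_notMem hw]
      ring

theorem hasStarPartition_insert_of_isIndepSet_untouched [Finite V] {c : V} {U : Set V}
    {W : Finset V} {b : ℕ} (hcU : ∀ u ∈ U, G.Adj c u) (hWU : ↑W ⊆ U)
    (hI : G.IsIndepSet {a | a ∈ U ∧ a ∉ W ∧ ∀ w ∈ W, ¬ G.Adj w a})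
    (hpart : ∀ w ∈ W, ∀ S ⊆ U \ W, (∀ u ∈ S, G.Adj w u) → HasStarPartition G (insert w S) b) :
    HasStarPartition G (insert c U) (#W * b + 1) := by
  classical
  have hc : c ∉ U := fun h => G.irrefl (hcU c h)
  have h₁ := hasStarPartition_insert_of_isIndepSet (fun h => hc h.1) (fun u hu => hcU u hu.1) hI
  have h₂ := hasStarPartition_union_of_dominating (G := G) (b := b) (W := W)
    (R := {a | a ∈ U ∧ a ∉ W ∧ ∃ w ∈ W, G.Adj w a})
    (Set.disjoint_left.mpr fun a ha ha' => ha'.2.1 ha) (fun a ha => ha.2.2)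
    fun w hw S hS hSw => hpart w hw S (fun a ha => ⟨(hS ha).1, (hS ha).2.1⟩) hSw
  have hdisj : Disjoint (insert c {a | a ∈ U ∧ a ∉ W ∧ ∀ w ∈ W, ¬ G.Adj w a})
      (↑W ∪ {a | a ∈ U ∧ a ∉ W ∧ ∃ w ∈ W, G.Adj w a}) := by
    rw [Set.disjoint_left]
    rintro a (rfl | ⟨-, haW, hnadj⟩) (haW' | ⟨haU, -, w, hw, hwa⟩)
    exacts [hc (hWU haW'), hc haU, haW haW', hnadj w hw hwa]
  convert h₁.union h₂ hdisj using 1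
  · ext a
    have := @hWU a
    by_cases h : ∃ w ∈ W, G.Adj w a <;> simp only [Set.mem_insert_iff, Set.mem_union,
      Set.mem_ofPred_eq, mem_coe, h] at this ⊢ <;> grind
  · ring

def IsInducedMatching (G : SimpleGraph V) (M : Set (V × V)) : Prop :=
  (∀ p ∈ M, G.Adj p.1 p.2) ∧ M.Pairwise fun p q => Separated G {p.1, p.2} {q.1, q.2}

theorem IsInducedMatching.hasInducedCopy_sTilde {n : ℕ} {M : Finset (V × V)}
    (hM : G.IsInducedMatching M) (hn : n ≤ #M) {x : V} (hx : ∀ p ∈ M, G.Adj x p.1 ∧ G.Adj x p.2) :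
    HasInducedCopy G (STilde n) := by
  let e : Fin n ↪ M := (Fin.castLEEmb hn).trans M.equivFin.symm.toEmbedding
  exact hasInducedCopy_sTilde_of_separated (y := fun i => (e i).1.1) (z := fun i => (e i).1.2)
    (fun i => (hx _ (e i).2).1) (fun i => (hx _ (e i).2).2) (fun i => hM.1 _ (e i).2)
    fun i j hij => hM.2 (e i).2 (e j).2 fun h => hij (e.injective (Subtype.ext h))

theorem exists_isInducedMatching_isIndepSet_untouched [DecidableEq V] (U : Finset V) :
    ∃ M : Finset (V × V), M ⊆ U ×ˢ U ∧ G.IsInducedMatching M ∧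
      G.IsIndepSet {a | a ∈ U ∧ a ∉ M.image Prod.fst ∪ M.image Prod.snd ∧
        ∀ w ∈ M.image Prod.fst ∪ M.image Prod.snd, ¬ G.Adj w a} := by
  classical
  obtain ⟨M, hM, hmax⟩ := exists_max_image
    ((U ×ˢ U).powerset.filter fun M : Finset (V × V) => G.IsInducedMatching ↑M) card
    ⟨∅, by simp [IsInducedMatching]⟩
  obtain ⟨hMU, hMind⟩ := mem_filter.mp hM
  refine ⟨M, mem_powerset.mp hMU, hMind, fun a ha b hb hab hadj => ?_⟩
  have hfar {v : V} (hv : v ∉ M.image Prod.fst ∪ M.image Prod.snd ∧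
      ∀ w ∈ M.image Prod.fst ∪ M.image Prod.snd, ¬ G.Adj w v) {q : V × V} (hq : q ∈ M) :
      (v ≠ q.1 ∧ ¬ G.Adj v q.1) ∧ (v ≠ q.2 ∧ ¬ G.Adj v q.2) := by
    have h₁ : q.1 ∈ M.image Prod.fst ∪ M.image Prod.snd :=
      mem_union_left _ (mem_image_of_mem _ hq)
    have h₂ : q.2 ∈ M.image Prod.fst ∪ M.image Prod.snd :=
      mem_union_right _ (mem_image_of_mem _ hq)
    exact ⟨⟨fun h => hv.1 (h ▸ h₁), fun h => hv.2 _ h₁ h.symm⟩,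
      ⟨fun h => hv.1 (h ▸ h₂), fun h => hv.2 _ h₂ h.symm⟩⟩
  have habM : (a, b) ∉ M := fun h => (hfar ha.2 h).1.1 rfl
  have hM' : insert (a, b) M ∈ (U ×ˢ U).powerset.filter
      fun M : Finset (V × V) => G.IsInducedMatching ↑M := by
    refine mem_filter.mpr ⟨mem_powerset.mpr (insert_subset (mk_mem_product ha.1 hb.1)
      (mem_powerset.mp hMU)), ?_, ?_⟩
    · simpa [coe_insert, hadj] using hMind.1
    · rw [coe_insert, Set.pairwise_insert]
      refine ⟨hMind.2, fun q hq _ => ?_⟩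
      have : Separated G {a, b} {q.1, q.2} := separated_pair_pair.mpr
        ⟨(hfar ha.2 hq).1, (hfar ha.2 hq).2, (hfar hb.2 hq).1, (hfar hb.2 hq).2⟩
      exact ⟨this, this.symm⟩
  have := hmax _ hM'
  rw [card_insert_of_notMem habM] at this
  omega

def starPartitionBound (n : ℕ) : ℕ → ℕ
  | 0 => 1
  | d + 1 => 2 * n * starPartitionBound n d + 1

theorem hasStarPartition_insert_of_isNClique [Fintype V] {n : ℕ} (hK : G.CliqueFree n)
    (hT : ¬ HasInducedCopy G (STilde n)) (d : ℕ) {k : ℕ} {C : Finset V} (hC : G.IsNClique k C)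
    (hkd : n ≤ k + d + 1) {c : V} (hc : c ∈ C) {U : Set V} (hU : ∀ u ∈ U, ∀ x ∈ C, G.Adj x u) :
    G.HasStarPartition (insert c U) (starPartitionBound n d) := by
  classical
  induction d generalizing k C c U with
  | zero =>
    obtain rfl : U = ∅ := Set.eq_empty_of_forall_notMem fun u hu =>
      hK.mono hkd _ (hC.insert fun x hx => (hU u hu x hx).symm)
    exact hasStarPartition_insert_of_isIndepSet (by simp) (by simp) (by simp)
  | succ d ih =>
    obtain ⟨M, hMU, hM, hI⟩ := exists_isInducedMatching_isIndepSet_untouched (G := G) U.toFinset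
    set W := M.image Prod.fst ∪ M.image Prod.snd
    have hMU' {p : V × V} (hp : p ∈ M) : p.1 ∈ U ∧ p.2 ∈ U := by
      simpa using mem_product.mp (hMU hp)
    have hWU : ↑W ⊆ U := by
      intro w hw
      rcases mem_union.mp hw with hw | hw <;> obtain ⟨p, hp, rfl⟩ := mem_image.mp hw
      exacts [(hMU' hp).1, (hMU' hp).2]
    have hMn : #M < n := lt_of_not_ge fun h =>
      hT (hM.hasInducedCopy_sTilde h fun p hp => ⟨hU _ (hMU' hp).1 c hc, hU _ (hMU' hp).2 c hc⟩)
    have hW : #W ≤ 2 * n := (card_union_le _ _).trans (by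
      have := M.card_image_le (f := Prod.fst)
      have := M.card_image_le (f := Prod.snd)
      omega)
    refine (hasStarPartition_insert_of_isIndepSet_untouched (b := starPartitionBound n d)
      (fun u hu => hU u hu c hc) hWU (by simpa using hI) fun w hw S hS hSw => ?_).mono ?_
    · have hwU := hWU hw
      refine ih (hC.insert fun x hx => (hU w hwU x hx).symm) (by omega) (mem_insert_self w C)
        fun u hu x hx => ?_
      rcases mem_insert.mp hx with rfl | hx
      exacts [hSw u hu, hU u (hS hu).1 x hx]
    · simp only [starPartitionBound]
      gcongr

end SimpleGraph

theorem statement_8_general (n : ℕ) :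
    ∃ c : ℕ, ∀ (V : Type) [Fintype V] (G : SimpleGraph V),
      G.Connected →
      ¬ HasInducedCopy G (completeGraph (Fin n)) →
      ¬ HasInducedCopy G (SStar n) →
      ¬ HasInducedCopy G (STilde n) →
      ¬ HasInducedCopy G (pathGraph n) →
      insp G ≤ c := by
  refine ⟨(ramseyBound (n - 1) (ramseyBound n n) + 1) ^ (n - 2) * starPartitionBound n (n - 2),
    fun V _ G hconn hK hS hT hP => ?_⟩
  rw [not_hasInducedCopy_completeGraph_iff] at hK
  obtain ⟨D, hDcard, hD⟩ := exists_dominating_card_le hconn hK hS hP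
  have hdom : ∀ u ∈ (↑D : Set V)ᶜ, ∃ w ∈ D, G.Adj w u := fun u hu => by
    obtain ⟨w, hw, rfl | hwu⟩ := hD u
    exacts [(hu hw).elim, ⟨w, hw, hwu⟩]
  have hpart := hasStarPartition_union_of_dominating disjoint_compl_right hdom
    fun w _ S _ hSw => hasStarPartition_insert_of_isNClique hK hT (n - 2)
      (isNClique_singleton.mpr rfl) (by omega) (mem_singleton_self w) (by simpa)
  rw [Set.union_compl_self] at hpart
  exact insp_le_of_hasStarPartition (hpart.mono (by gcongr))

theorem statement_8 (n : ℕ) (hn : 4 ≤ n) :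
    ∃ c : ℕ, ∀ (V : Type) [Fintype V] (G : SimpleGraph V),
      G.Connected →
      ¬ HasInducedCopy G (completeGraph (Fin n)) →
      ¬ HasInducedCopy G (SStar n) →
      ¬ HasInducedCopy G (STilde n) →
      ¬ HasInducedCopy G (pathGraph n) →
      insp G ≤ c :=
  statement_8_general n
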